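/- arXiv:2012.02668 — 8 statements merged into one kernel-verified Lean document; each statement's English description precedes it below -/
import Mathlib

section
/- Let G be a finite group with exactly three involutions that are pairwise conjugate in G (a 'pertinent' group), let K be the subgroup generated by the three involutions and C = C_G(K) its centralizer. Then C is normal in G and the quotient G/C is isomorphic either to the symmetric group S₃ or to the cyclic group of order 3. -/
/-!
Conjugation permutes the three involutions, which gives a homomorphism `G → S₃` whose kernel is
the centralizer of the involutions, i.e. the centralizer of the subgroup `K` they generate.
Since the involutions are pairwise conjugate, the image acts transitively on three points, so its
order is divisible by 3 and divides 6: the image is either all of `S₃` or cyclic of order 3.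
-/

/-- A finite group is *pertinent* if it has exactly three involutions and
they are pairwise conjugate. -/
def Pertinent (G : Type*) [Group G] : Prop :=
  Finite G ∧ {g : G | orderOf g = 2}.ncard = 3 ∧
    ∀ a b : G, orderOf a = 2 → orderOf b = 2 → IsConj a b

open Equiv MulAction

section TransitiveOnThree

variable {α : Type*} (H : Subgroup (Perm α)) [IsPretransitive H α]

theorem Subgroup.card_eq_three_or_six_of_isPretransitive (hα : Nat.card α = 3) :
    Nat.card H = 3 ∨ Nat.card H = 6 := by
  have : Finite α := Nat.finite_of_card_ne_zero (by omega)
  obtain ⟨a⟩ : Nonempty α := (Nat.card_pos_iff.mp (by omega)).1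
  have h3 : 3 ∣ Nat.card H :=
    hα ▸ index_stabilizer_of_transitive H a ▸ (stabilizer H a).index_dvd_card
  have h6 : Nat.card H ∣ 6 := by
    simpa [Nat.card_perm, hα, Nat.factorial] using H.card_subgroup_dvd_card
  obtain ⟨k, hk⟩ := h3
  have : k ∣ 2 := Nat.dvd_of_mul_dvd_mul_left (by norm_num) (hk ▸ h6)
  rcases (Nat.dvd_prime Nat.prime_two).mp this with rfl | rfl <;> omega

theorem Subgroup.nonempty_mulEquiv_perm_or_zmod_of_isPretransitive (hα : Nat.card α = 3) :
    Nonempty (H ≃* Perm (Fin 3)) ∨ Nonempty (H ≃* Multiplicative (ZMod 3)) := by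
  have : Finite α := Nat.finite_of_card_ne_zero (by omega)
  rcases H.card_eq_three_or_six_of_isPretransitive hα with h3 | h6
  · have : Fact (Nat.Prime 3) := ⟨Nat.prime_three⟩
    exact .inr ⟨mulEquivOfPrimeCardEq h3 (by simp)⟩
  · have htop : H = ⊤ := H.eq_top_of_card_eq (by simp [h6, Nat.card_perm, hα, Nat.factorial])
    exact .inl ⟨(MulEquiv.subgroupCongr htop).trans <| Subgroup.topEquiv.trans
      (Finite.equivFinOfCardEq hα).permCongrHom⟩

end TransitiveOnThree

section Conjugation

variable (G : Type*) [Group G]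

def elementsOfOrder (n : ℕ) : SubMulAction (ConjAct G) G where
  carrier := {g | orderOf g = n}
  smul_mem' c x hx := by
    rw [Set.mem_ofPred_eq, ConjAct.smul_def,
      ← (SemiconjBy.conj_mk (ConjAct.ofConjAct c) x).orderOf_eq]
    exact hx

@[simp]
theorem coe_elementsOfOrder (n : ℕ) : (elementsOfOrder G n : Set G) = {g | orderOf g = n} :=
  rfl

variable {G}

def conjPermHom (p : SubMulAction (ConjAct G) G) : G →* Perm p :=
  (toPermHom (ConjAct G) p).comp ConjAct.toConjAct.toMonoidHom

theorem ker_conjPermHom (p : SubMulAction (ConjAct G) G) :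
    (conjPermHom p).ker = Subgroup.centralizer (p : Set G) := by
  ext g
  simp only [conjPermHom, MonoidHom.mem_ker, MonoidHom.comp_apply, Perm.ext_iff,
    toPermHom_apply, toPerm_apply, Perm.coe_one, id_eq, Subtype.ext_iff,
    SubMulAction.val_smul, Subtype.forall, SetLike.mem_coe, Subgroup.mem_centralizer_iff]
  refine forall₂_congr fun x _ => ?_
  rw [MulEquiv.coe_toMonoidHom, ConjAct.toConjAct_smul, mul_inv_eq_iff_eq_mul, eq_comm]

theorem isPretransitive_range_conjPermHom (p : SubMulAction (ConjAct G) G)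
    (hp : ∀ a ∈ p, ∀ b ∈ p, IsConj a b) : IsPretransitive (conjPermHom p).range p := by
  refine ⟨fun a b => ?_⟩
  obtain ⟨c, hc⟩ := isConj_iff.mp (hp a a.2 b b.2)
  exact ⟨⟨conjPermHom p c, c, rfl⟩, Subtype.ext hc⟩

end Conjugation

theorem stmt_0 (G : Type*) [Group G] (hG : Pertinent G) :
    ∃ hn : (Subgroup.centralizer
        ((Subgroup.closure {g : G | orderOf g = 2} : Subgroup G) : Set G)).Normal,
      letI := hn
      Nonempty ((G ⧸ Subgroup.centralizer
          ((Subgroup.closure {g : G | orderOf g = 2} : Subgroup G) : Set G))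
        ≃* Equiv.Perm (Fin 3)) ∨
      Nonempty ((G ⧸ Subgroup.centralizer
          ((Subgroup.closure {g : G | orderOf g = 2} : Subgroup G) : Set G))
        ≃* Multiplicative (ZMod 3)) := by
  obtain ⟨-, hcard, hconj⟩ := hG
  let p := elementsOfOrder G 2
  have hp : Nat.card p = 3 := (Nat.card_coe_set_eq _).trans hcard
  have : IsPretransitive (conjPermHom p).range p :=
    isPretransitive_range_conjPermHom p fun a ha b hb => hconj a b ha hb
  rw [Subgroup.centralizer_closure, ← coe_elementsOfOrder, ← ker_conjPermHom]
  refine ⟨(conjPermHom p).normal_ker, ?_⟩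
  have e := QuotientGroup.quotientKerEquivRange (conjPermHom p)
  rcases (conjPermHom p).range.nonempty_mulEquiv_perm_or_zmod_of_isPretransitive hp with
    ⟨⟨f⟩⟩ | ⟨⟨f⟩⟩
  exacts [.inl ⟨e.trans f⟩, .inr ⟨e.trans f⟩]
end

section
/- Let G be a pertinent group (a finite group with exactly three, pairwise conjugate, involutions), K the subgroup generated by its involutions and C = C_G(K). If H is a subgroup of G of even order with HC = G, then H is pertinent. -/
theorem stmt_1 (G : Type*) [Group G] (hG : Pertinent G) (H : Subgroup G)
    (hHeven : Even (Nat.card H))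
    (hHC : ∀ g : G, ∃ h ∈ H, ∃ c ∈ Subgroup.centralizer
        ((Subgroup.closure {g : G | orderOf g = 2} : Subgroup G) : Set G), g = h * c) :
    Pertinent H := by
  obtain ⟨hfin, hcard, hconj⟩ := hG
  haveI : Finite G := hfin
  haveI : Fact (Nat.Prime 2) := ⟨Nat.prime_two⟩
  haveI : Fintype H := Fintype.ofFinite H
  obtain ⟨t, ht⟩ := exists_prime_orderOf_dvd_card (G := H) 2
    (by rw [Fintype.card_eq_nat_card]; exact even_iff_two_dvd.mp hHeven)
  have hord : ∀ x : H, orderOf (x : G) = orderOf x := fun x =>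
    orderOf_injective H.subtype H.subtype_injective x
  have htG : orderOf (t : G) = 2 := by rw [hord, ht]
  -- every involution of G is conjugate to t by an element of H
  have key : ∀ b : G, orderOf b = 2 → ∃ h ∈ H, h * (t : G) * h⁻¹ = b := by
    intro b hb
    obtain ⟨g, hg⟩ := isConj_iff.mp (hconj _ b htG hb)
    obtain ⟨h, hhH, c, hcC, rfl⟩ := hHC g
    have hct : (t : G) * c = c * (t : G) :=
      (Subgroup.mem_centralizer_iff.mp hcC) (t : G)
        (Subgroup.subset_closure (by simpa using htG))
    have hc : c * (t : G) * c⁻¹ = t := by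
      rw [← hct]; group
    refine ⟨h, hhH, ?_⟩
    have hrw : (h * c) * (t : G) * (h * c)⁻¹ = h * (c * (t : G) * c⁻¹) * h⁻¹ := by
      group
    rw [hrw, hc] at hg
    exact hg
  have himg : Subtype.val '' {x : H | orderOf x = 2} = {g : G | orderOf g = 2} := by
    ext b
    constructor
    · rintro ⟨x, hx, rfl⟩
      show orderOf (x : G) = 2
      rw [hord]; exact hx
    · intro hb
      obtain ⟨h, hhH, hht⟩ := key b hb
      have hbH : b ∈ H := hht ▸ H.mul_mem (H.mul_mem hhH t.2) (H.inv_mem hhH)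
      refine ⟨⟨b, hbH⟩, ?_, rfl⟩
      show orderOf (⟨b, hbH⟩ : H) = 2
      rw [← hord]; exact hb
  -- conjugacy to t inside H
  have keyH : ∀ a : H, orderOf a = 2 → IsConj t a := by
    intro a ha
    have haG : orderOf (a : G) = 2 := by rw [hord, ha]
    obtain ⟨h, hhH, hht⟩ := key (a : G) haG
    refine isConj_iff.mpr ⟨⟨h, hhH⟩, ?_⟩
    apply Subtype.ext
    push_cast
    exact hht
  refine ⟨inferInstance, ?_, ?_⟩
  · have := Set.ncard_image_of_injective {x : H | orderOf x = 2} Subtype.val_injective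
    rw [himg, hcard] at this
    exact this.symm
  · intro a b ha hb
    exact (keyH a ha).symm.trans (keyH b hb)
end

section
/- Let G be a pertinent group, K the subgroup generated by its three involutions, C = C_G(K), and let Q be a Sylow p-subgroup of C for some prime p. Then the normalizer N_G(Q) is a pertinent group. -/
/-!
Write `S` for the involutions of `G`, so that `C = C_G(K) = C_G(S)`. Since `S` is closed under
conjugation, `K` and hence `C` are normal, and the Frattini argument gives `G = N_G(Q) C`.
Every involution centralizes `C ≥ Q`, so all of `S` lies in `N_G(Q)`; and as `C` centralizes
`S`, a conjugation `g = n c` between two involutions can be replaced by its factor `n ∈ N_G(Q)`.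
-/

section

variable {G : Type*} [Group G]

theorem IsConj.orderOf_eq {a b : G} (h : IsConj a b) : orderOf a = orderOf b := by
  obtain ⟨c, rfl⟩ := isConj_iff.mp h
  exact SemiconjBy.orderOf_eq c (by rw [SemiconjBy]; group)

namespace Subgroup

theorem normal_closure_of_isConj_mem {s : Set G} (hs : ∀ a ∈ s, ∀ b, IsConj a b → b ∈ s) :
    (closure s).Normal := by
  have hconj : Group.conjugatesOfSet s = s := by
    refine subset_antisymm (fun b hb => ?_) Group.subset_conjugatesOfSet
    obtain ⟨a, ha, hab⟩ := Group.mem_conjugatesOfSet_iff.mp hb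
    exact hs a ha b hab
  rw [← hconj]
  exact normalClosure_normal

theorem normal_closure_setOf_orderOf_eq (n : ℕ) : (closure {g : G | orderOf g = n}).Normal :=
  normal_closure_of_isConj_mem fun _ ha _ hab => hab.orderOf_eq.symm.trans ha

theorem ncard_setOf_orderOf_eq_of_subset (H : Subgroup G) {n : ℕ}
    (hH : {g : G | orderOf g = n} ⊆ H) :
    {x : H | orderOf x = n}.ncard = {g : G | orderOf g = n}.ncard := by
  have hpre : {x : H | orderOf x = n} = Subtype.val ⁻¹' {g : G | orderOf g = n} := by
    ext x
    simp
  rw [hpre, Set.ncard_preimage_of_injective_subset_range Subtype.val_injective]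
  simpa using hH

theorem isConj_of_sup_eq_top {H C : Subgroup G} [C.Normal] (hHC : H ⊔ C = ⊤) {a b : H}
    (hCa : C ≤ centralizer {(a : G)}) (hab : IsConj (a : G) b) : IsConj a b := by
  obtain ⟨g, hg⟩ := isConj_iff.mp hab
  have hg' : g ∈ ((H ⊔ C : Subgroup G) : Set G) := by simp [hHC]
  rw [mul_normal] at hg'
  obtain ⟨h, hh, c, hc, rfl⟩ := hg'
  have hca : c * a * c⁻¹ = a := by
    rw [mem_centralizer_singleton_iff.mp (hCa hc), mul_inv_cancel_right]
  refine isConj_iff.mpr ⟨⟨h, hh⟩, Subtype.ext ?_⟩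
  calc h * (a : G) * h⁻¹ = h * (c * a * c⁻¹) * h⁻¹ := by rw [hca]
    _ = h * c * a * (h * c)⁻¹ := by group
    _ = b := hg

theorem subset_normalizer_of_le_centralizer {s : Set G} {L : Subgroup G}
    (hL : L ≤ centralizer s) : s ⊆ normalizer (L : Set G) := fun g hg =>
  centralizer_le_normalizer _ <|
    mem_centralizer_iff.mpr fun _ hl => (mem_centralizer_iff.mp (hL hl) g hg).symm

end Subgroup

open Subgroup in
theorem Pertinent.of_sup_eq_top (hG : Pertinent G) {H C : Subgroup G} [C.Normal]
    (hHC : H ⊔ C = ⊤) (hSH : {g : G | orderOf g = 2} ⊆ H)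
    (hCS : C ≤ centralizer {g : G | orderOf g = 2}) : Pertinent H := by
  obtain ⟨hfin, hcard, hconj⟩ := hG
  refine ⟨inferInstance, (H.ncard_setOf_orderOf_eq_of_subset hSH).trans hcard,
    fun a b ha hb => ?_⟩
  rw [← orderOf_coe] at ha hb
  exact isConj_of_sup_eq_top hHC (hCS.trans (centralizer_le (by simpa using ha)))
    (hconj a b ha hb)

end

theorem stmt_2 (G : Type*) [Group G] (hG : Pertinent G) (p : ℕ) [Fact p.Prime]
    (Q : Sylow p (Subgroup.centralizer
        ((Subgroup.closure {g : G | orderOf g = 2} : Subgroup G) : Set G))) :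
    Pertinent (Subgroup.normalizer ((Q : Subgroup _).map
      (Subgroup.centralizer
        ((Subgroup.closure {g : G | orderOf g = 2} : Subgroup G) : Set G)).subtype : Set G)) := by
  have : Finite G := hG.1
  have := Subgroup.normal_closure_setOf_orderOf_eq (G := G) 2
  have hCS := Subgroup.centralizer_le (G := G) (Subgroup.subset_closure (k := {g | orderOf g = 2}))
  exact hG.of_sup_eq_top (Sylow.normalizer_sup_eq_top Q)
    (Subgroup.subset_normalizer_of_le_centralizer ((Subgroup.map_subtype_le _).trans hCS)) hCS
end

section
/- Let G be a pertinent group whose three involutions commute pairwise, and let H be a normal subgroup of G of odd order. Then the quotient G/H is pertinent: it has exactly three involutions and they are pairwise conjugate. -/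
theorem stmt_4 (G : Type*) [Group G] (hG : Pertinent G)
    (hcomm : ∀ a b : G, orderOf a = 2 → orderOf b = 2 → a * b = b * a)
    (H : Subgroup G) [H.Normal] (hodd : Odd (Nat.card H)) :
    Pertinent (G ⧸ H) := by
  obtain ⟨hfin, hcard, hconj⟩ := hG
  have : Finite G := hfin
  have hfinQ : Finite (G ⧸ H) := Quotient.finite _
  -- no element of even order in H
  have hnotH : ∀ a : G, a ∈ H → ¬ (2 ∣ orderOf a) := by
    intro a haH hdvd
    have h1 : orderOf (H.subtype ⟨a, haH⟩) = orderOf (⟨a, haH⟩ : H) :=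
      orderOf_injective H.subtype Subtype.coe_injective ⟨a, haH⟩
    have h2 : orderOf a ∣ Nat.card H := by
      have := orderOf_dvd_natCard (⟨a, haH⟩ : H)
      rwa [← h1] at this
    have h3 : 2 ∣ Nat.card H := dvd_trans hdvd h2
    rcases h3 with ⟨k, hk⟩
    rcases hodd with ⟨m, hm⟩
    omega
  -- forward: involutions of G map to involutions of G/H
  have hfwd : ∀ a : G, orderOf a = 2 →
      orderOf (QuotientGroup.mk a : G ⧸ H) = 2 := by
    intro a ha
    refine orderOf_eq_prime ?_ ?_
    · have h1 : a ^ 2 = 1 := by rw [← ha]; exact pow_orderOf_eq_one a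
      rw [← QuotientGroup.mk_pow, h1]
      rfl
    · intro h
      have haH : a ∈ H := (QuotientGroup.eq_one_iff a).mp h
      exact hnotH a haH (by rw [ha])
  -- surjectivity: every involution of G/H comes from an involution of G
  have hsurj : ∀ q : G ⧸ H, orderOf q = 2 →
      ∃ a : G, orderOf a = 2 ∧ (QuotientGroup.mk a : G ⧸ H) = q := by
    intro q hq
    obtain ⟨x, rfl⟩ := QuotientGroup.mk_surjective q
    have hx2H : x ^ 2 ∈ H := by
      rw [← QuotientGroup.eq_one_iff, QuotientGroup.mk_pow, ← hq]
      exact pow_orderOf_eq_one _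
    set n := orderOf x with hn
    have hnpos : 0 < n := orderOf_pos x
    have h2n : 2 ∣ n := by
      rw [← hq, hn]; exact orderOf_map_dvd (QuotientGroup.mk' H) x
    obtain ⟨t, hnt⟩ := h2n
    have htodd : Odd t := by
      have hox2 : orderOf (x ^ 2) = t := by
        rw [orderOf_pow, ← hn, hnt, Nat.gcd_comm,
          Nat.gcd_eq_left (dvd_mul_right 2 t)]
        omega
      by_contra htev
      exact hnotH (x ^ 2) hx2H
        (by rw [hox2]; exact (Nat.not_odd_iff_even.mp htev).two_dvd)
    have htpos : 0 < t := by omega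
    refine ⟨x ^ t, ?_, ?_⟩
    · rw [orderOf_pow, ← hn, hnt, Nat.gcd_comm,
        Nat.gcd_eq_left (dvd_mul_left t 2), Nat.mul_div_cancel _ htpos]
    · obtain ⟨m, hm⟩ := htodd
      rw [QuotientGroup.mk_pow, hm, pow_add, pow_mul, pow_one]
      have : ((QuotientGroup.mk x : G ⧸ H)) ^ 2 = 1 := by
        rw [← hq]; exact pow_orderOf_eq_one _
      rw [this, one_pow, one_mul]
  have hset : {q : G ⧸ H | orderOf q = 2} =
      (QuotientGroup.mk : G → G ⧸ H) '' {g : G | orderOf g = 2} := by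
    ext q
    constructor
    · intro hq
      obtain ⟨a, ha, haq⟩ := hsurj q hq
      exact ⟨a, ha, haq⟩
    · rintro ⟨a, ha, rfl⟩
      exact hfwd a ha
  have hinj : Set.InjOn (QuotientGroup.mk : G → G ⧸ H) {g : G | orderOf g = 2} := by
    intro a ha b hb hab
    by_contra hne
    have habH : a⁻¹ * b ∈ H := QuotientGroup.eq.mp hab
    have ha2 : a * a = 1 := by
      rw [← pow_two, ← ha]; exact pow_orderOf_eq_one a
    have hb2 : b * b = 1 := by
      rw [← pow_two, ← hb]; exact pow_orderOf_eq_one b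
    have hainv : a⁻¹ = a := by
      rw [inv_eq_iff_mul_eq_one]; exact ha2
    rw [hainv] at habH
    have hsq : (a * b) ^ 2 = 1 := by
      have := hcomm a b ha hb
      rw [pow_two]
      calc a * b * (a * b) = a * (b * a) * b := by group
        _ = a * (a * b) * b := by rw [← this]
        _ = (a * a) * (b * b) := by group
        _ = 1 := by rw [ha2, hb2, one_mul]
    have hne1 : a * b ≠ 1 := by
      intro h
      have hbinv : b⁻¹ = b := by rw [inv_eq_iff_mul_eq_one]; exact hb2
      exact hne ((mul_eq_one_iff_eq_inv.mp h).trans hbinv)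
    have : orderOf (a * b) = 2 := orderOf_eq_prime hsq hne1
    exact hnotH (a * b) habH (by rw [this])
  constructor
  · exact hfinQ
  constructor
  · rw [hset, Set.ncard_image_of_injOn hinj, hcard]
  · intro p q hp hq
    obtain ⟨a, ha, rfl⟩ := hsurj p hp
    obtain ⟨b, hb, rfl⟩ := hsurj q hq
    obtain ⟨c, hc⟩ := isConj_iff.mp (hconj a b ha hb)
    exact isConj_iff.mpr ⟨QuotientGroup.mk c, by
      rw [← QuotientGroup.mk_inv, ← QuotientGroup.mk_mul, ← QuotientGroup.mk_mul, hc]⟩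
end

section
/- Let G be a pertinent group whose order is divisible by 4. Then the subgroup K generated by the three involutions of G is isomorphic to the Klein four-group ℤ/2 × ℤ/2; in particular the three involutions commute pairwise and the product of any two distinct involutions equals the third. -/
/-! Conjugation permutes the three involutions, so `G` modulo the centralizer `C` of the
involutions embeds in `S₃`. Since `4 ∣ |G|` but `4 ∤ 6`, `C` has even order and, by Cauchy,
contains an involution `t`; it commutes with another involution `s`. The three involutions are
then `s`, `t` and `st`; they commute pairwise, and with `1` they form a Klein four-group. -/

theorem MulAction.exists_orderOf_eq_prime_forall_smul_eq {G α : Type*} [Group G] [MulAction G α]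
    [Finite G] [Finite α] {p k : ℕ} [Fact p.Prime] (hG : p ^ k ∣ Nat.card G)
    (hα : ¬ p ^ k ∣ (Nat.card α).factorial) : ∃ g : G, orderOf g = p ∧ ∀ a : α, g • a = a := by
  set K := (toPermHom G α).ker
  have hK : p ∣ Nat.card K := by
    by_contra hp
    have hindex : p ^ k ∣ K.index :=
      (((Nat.Prime.coprime_iff_not_dvd Fact.out).mpr hp).pow_left k).dvd_of_dvd_mul_left
        (by rwa [Subgroup.card_mul_index])
    refine hα (hindex.trans ?_)
    rw [Subgroup.index_ker, ← Nat.card_perm]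
    exact Subgroup.card_subgroup_dvd_card _
  obtain ⟨g, hg⟩ := exists_prime_orderOf_dvd_card' p hK
  exact ⟨g, (Subgroup.orderOf_coe g).trans hg, fun a => congr($(g.2) a)⟩

theorem Set.eq_of_ncard_eq_three_of_mem {α : Type*} {s : Set α} (hs : s.ncard = 3) {a b c : α}
    (ha : a ∈ s) (hb : b ∈ s) (hc : c ∈ s) (hab : a ≠ b) (hac : a ≠ c) (hbc : b ≠ c) :
    s = {a, b, c} := by
  refine (Set.eq_of_subset_of_ncard_le ?_ ?_ (Set.finite_of_ncard_ne_zero (by omega))).symm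
  · rintro x (rfl | rfl | rfl) <;> assumption
  · rw [hs, Set.ncard_eq_three.mpr ⟨a, b, c, hab, hac, hbc, rfl⟩]

section Involutions

variable {G : Type*} [Group G]

theorem orderOf_mul_eq_two_of_commute {a b : G} (ha : orderOf a = 2) (hb : orderOf b = 2)
    (hab : a ≠ b) (hcomm : Commute a b) : orderOf (a * b) = 2 := by
  have : Fact (Nat.Prime 2) := ⟨Nat.prime_two⟩
  refine orderOf_eq_prime ?_ fun h => mul_notMem_of_orderOf_eq_two ha hb hab (by simp [h])
  rw [hcomm.mul_pow, ← ha, pow_orderOf_eq_one, one_mul, ha, ← hb, pow_orderOf_eq_one]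

variable (G) in
def involutionsSubMulAction : SubMulAction (ConjAct G) G where
  carrier := {g | orderOf g = 2}
  smul_mem' c g hg := by
    rwa [Set.mem_ofPred_eq, ConjAct.smul_eq_mulAut_conj, MulEquiv.orderOf_eq]

theorem exists_ne_commute_of_ncard_involutions_eq_three [Finite G]
    (h3 : {g : G | orderOf g = 2}.ncard = 3) (h4 : 4 ∣ Nat.card G) :
    ∃ a b : G, orderOf a = 2 ∧ orderOf b = 2 ∧ a ≠ b ∧ Commute a b := by
  have : Fact (Nat.Prime 2) := ⟨Nat.prime_two⟩
  have : Finite (ConjAct G) := .of_equiv G ConjAct.toConjAct.toEquiv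
  have hcard : Nat.card (involutionsSubMulAction G) = 3 := Nat.card_coe_set_eq _ ▸ h3
  obtain ⟨t, ht, hfix⟩ := MulAction.exists_orderOf_eq_prime_forall_smul_eq
    (G := ConjAct G) (α := involutionsSubMulAction G) (p := 2) (k := 2)
    (by rwa [Nat.card_congr ConjAct.ofConjAct.toEquiv]) (by rw [hcard]; decide)
  obtain ⟨s, hs, hst⟩ :=
    Set.exists_ne_of_one_lt_ncard (s := {g : G | orderOf g = 2}) (by omega) (ConjAct.ofConjAct t)
  refine ⟨_, s, (MulEquiv.orderOf_eq _ t).trans ht, hs, hst.symm, ?_⟩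
  have hts := congr(Subtype.val $(hfix ⟨s, hs⟩))
  rwa [SubMulAction.val_smul, ConjAct.smul_def, mul_inv_eq_iff_eq_mul] at hts

theorem involutions_eq_of_commute (h3 : {g : G | orderOf g = 2}.ncard = 3) {a b : G}
    (ha : orderOf a = 2) (hb : orderOf b = 2) (hab : a ≠ b) (hcomm : Commute a b) :
    {g : G | orderOf g = 2} = {a, b, a * b} := by
  have hne := mul_notMem_of_orderOf_eq_two ha hb hab
  simp only [Set.mem_insert_iff, Set.mem_singleton_iff, not_or] at hne
  exact Set.eq_of_ncard_eq_three_of_mem h3 ha hb (orderOf_mul_eq_two_of_commute ha hb hab hcomm)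
    hab (Ne.symm hne.1) (Ne.symm hne.2.1)

theorem commute_of_orderOf_eq_two_of_commute (h3 : {g : G | orderOf g = 2}.ncard = 3) {a b : G}
    (ha : orderOf a = 2) (hb : orderOf b = 2) (hab : a ≠ b) (hcomm : Commute a b) {x y : G}
    (hx : orderOf x = 2) (hy : orderOf y = 2) : Commute x y := by
  have hS := involutions_eq_of_commute h3 ha hb hab hcomm
  have hxS : x ∈ ({a, b, a * b} : Set G) := hS ▸ hx
  have hyS : y ∈ ({a, b, a * b} : Set G) := hS ▸ hy
  have hxa : Commute x a ∧ Commute x b := by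
    rcases hxS with rfl | rfl | rfl
    · exact ⟨.refl x, hcomm⟩
    · exact ⟨hcomm.symm, .refl x⟩
    · exact ⟨(Commute.refl a).mul_left hcomm.symm, hcomm.mul_left (.refl b)⟩
  rcases hyS with rfl | rfl | rfl
  exacts [hxa.1, hxa.2, hxa.1.mul_right hxa.2]

theorem mul_eq_of_orderOf_eq_two (h3 : {g : G | orderOf g = 2}.ncard = 3)
    (hcomm : ∀ x y : G, orderOf x = 2 → orderOf y = 2 → Commute x y) {a b c : G}
    (ha : orderOf a = 2) (hb : orderOf b = 2) (hc : orderOf c = 2)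
    (hab : a ≠ b) (hac : a ≠ c) (hbc : b ≠ c) : a * b = c := by
  have hS := Set.eq_of_ncard_eq_three_of_mem h3 ha hb hc hab hac hbc
  have habS : a * b ∈ ({a, b, c} : Set G) :=
    hS ▸ orderOf_mul_eq_two_of_commute ha hb hab (hcomm a b ha hb)
  have hne := mul_notMem_of_orderOf_eq_two ha hb hab
  simp only [Set.mem_insert_iff, Set.mem_singleton_iff] at habS hne
  tauto

theorem coe_closure_involutions
    (hcomm : ∀ x y : G, orderOf x = 2 → orderOf y = 2 → Commute x y) :
    (Subgroup.closure {g : G | orderOf g = 2} : Set G) = insert 1 {g : G | orderOf g = 2} := by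
  refine subset_antisymm (fun x hx => ?_) ?_
  · induction hx using Subgroup.closure_induction with
    | mem x hx => exact Or.inr hx
    | one => exact Or.inl rfl
    | mul x y _ _ hx hy =>
      rcases hx with rfl | hx
      · rwa [one_mul]
      rcases hy with rfl | hy
      · rw [mul_one]; exact Or.inr hx
      by_cases hxy : x = y
      · subst hxy
        exact Or.inl (mul_eq_one_iff_eq_inv.mpr (inv_eq_self_of_orderOf_eq_two hx).symm)
      · exact Or.inr (orderOf_mul_eq_two_of_commute hx hy hxy (hcomm x y hx hy))
    | inv x _ hx =>
      rcases hx with rfl | hx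
      · exact Or.inl inv_one
      · exact Or.inr ((inv_eq_self_of_orderOf_eq_two hx).symm ▸ hx)
  · exact Set.insert_subset (Subgroup.one_mem _) Subgroup.subset_closure

theorem isKleinFour_closure_involutions (h3 : {g : G | orderOf g = 2}.ncard = 3)
    (hcomm : ∀ x y : G, orderOf x = 2 → orderOf y = 2 → Commute x y) :
    IsKleinFour (Subgroup.closure {g : G | orderOf g = 2}) := by
  have hK := coe_closure_involutions hcomm
  have hcard : Nat.card (Subgroup.closure {g : G | orderOf g = 2}) = 4 := by
    rw [← SetLike.coe_sort_coe, hK, Nat.card_coe_set_eq,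
      Set.ncard_insert_of_notMem (by simp) (Set.finite_of_ncard_ne_zero (by omega)), h3]
  have : Finite (Subgroup.closure {g : G | orderOf g = 2}) :=
    Nat.finite_of_card_ne_zero (by omega)
  have : Nontrivial (Subgroup.closure {g : G | orderOf g = 2}) :=
    Finite.one_lt_card_iff_nontrivial.mp (by omega)
  refine ⟨hcard, (Monoid.exponent_eq_prime_iff Nat.prime_two).mpr fun g hg => ?_⟩
  have hgK : (g : G) ∈ insert 1 {g : G | orderOf g = 2} := hK ▸ g.2
  rw [← Subgroup.orderOf_coe]
  exact hgK.resolve_left (by simpa using hg)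

end Involutions

theorem stmt_7 (G : Type*) [Group G] (hG : Pertinent G) (h4 : 4 ∣ Nat.card G) :
    Nonempty (↥(Subgroup.closure {g : G | orderOf g = 2})
        ≃* (Multiplicative (ZMod 2) × Multiplicative (ZMod 2))) ∧
    (∀ a b : G, orderOf a = 2 → orderOf b = 2 → a * b = b * a) ∧
    (∀ a b c : G, orderOf a = 2 → orderOf b = 2 → orderOf c = 2 →
      a ≠ b → a ≠ c → b ≠ c → a * b = c) := by
  obtain ⟨_, h3, -⟩ := hG
  obtain ⟨a, b, ha, hb, hab, hcomm⟩ := exists_ne_commute_of_ncard_involutions_eq_three h3 h4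
  have hinv : ∀ x y : G, orderOf x = 2 → orderOf y = 2 → Commute x y :=
    fun x y => commute_of_orderOf_eq_two_of_commute h3 ha hb hab hcomm
  have := isKleinFour_closure_involutions h3 hinv
  exact ⟨⟨IsKleinFour.nonempty_mulEquiv.some.trans (MulEquiv.prodMultiplicative _ _)⟩, hinv,
    fun _ _ _ => mul_eq_of_orderOf_eq_two h3 hinv⟩
end

section
/- For every α ≥ 1, the semidirect product G_α = (ℤ/2^α × ℤ/2^α) ⋊ ℤ/3, where the generator of ℤ/3 acts by (x, y) ↦ (−y, x − y), has exactly three involutions, namely (2^{α−1}, 0), (0, 2^{α−1}) and (2^{α−1}, 2^{α−1}) (in the normal subgroup), and these three involutions are pairwise conjugate in G_α. Hence G_α is a pertinent group of order 3·4^α. -/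
/-- The additive automorphism `(x, y) ↦ (-y, x - y)` of `ℤ/2^α × ℤ/2^α`. -/
def thetaAddEquiv (α : ℕ) : (ZMod (2 ^ α) × ZMod (2 ^ α)) ≃+ (ZMod (2 ^ α) × ZMod (2 ^ α)) where
  toFun p := (-p.2, p.1 - p.2)
  invFun p := (p.2 - p.1, -p.1)
  left_inv := by rintro ⟨x, y⟩; simp [Prod.ext_iff]
  right_inv := by rintro ⟨x, y⟩; simp [Prod.ext_iff]
  map_add' := by rintro ⟨x, y⟩ ⟨x', y'⟩; simp [Prod.ext_iff]; constructor <;> ring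

/-- The same map as a multiplicative automorphism of
`Multiplicative (ℤ/2^α × ℤ/2^α)`. -/
def A0 (α : ℕ) : MulAut (Multiplicative (ZMod (2 ^ α) × ZMod (2 ^ α))) :=
  AddEquiv.toMultiplicative (thetaAddEquiv α)

lemma A0_cube (α : ℕ) : A0 α ^ 3 = 1 := by
  refine MulEquiv.ext fun p => ?_
  show (A0 α) ((A0 α) ((A0 α) p)) = p
  apply Multiplicative.toAdd.injective
  simp [A0, thetaAddEquiv, Prod.ext_iff]
  ring

/-- The action `θ : ℤ/3 → Aut(ℤ/2^α × ℤ/2^α)` determined by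
`θ(1)(x, y) = (-y, x - y)`. -/
def theta (α : ℕ) :
    Multiplicative (ZMod 3) →* MulAut (Multiplicative (ZMod (2 ^ α) × ZMod (2 ^ α))) :=
  AddMonoidHom.toMultiplicativeLeft
    (ZMod.lift 3
      ⟨zmultiplesHom (Additive (MulAut (Multiplicative (ZMod (2 ^ α) × ZMod (2 ^ α)))))
          (Additive.ofMul (A0 α)),
        by
          show (3 : ℤ) • Additive.ofMul (A0 α) = 0
          have h : (A0 α) ^ (3 : ℤ) = 1 := by
            rw [show (3 : ℤ) = ((3 : ℕ) : ℤ) by norm_num, zpow_natCast, A0_cube]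
          rw [← ofMul_zpow, h, ofMul_one]⟩)

/-- The group `G_α = (ℤ/2^α × ℤ/2^α) ⋊ ℤ/3`, with the generator of `ℤ/3`
acting by `(x, y) ↦ (-y, x - y)`. -/
abbrev Galpha (α : ℕ) :=
  SemidirectProduct (Multiplicative (ZMod (2 ^ α) × ZMod (2 ^ α)))
    (Multiplicative (ZMod 3)) (theta α)

namespace SemidirectProduct

variable {N G : Type*} [Group N] [Group G] {φ : G →* MulAut N}

lemma isConj_inl_apply (g : G) (n : N) : IsConj (inl n : N ⋊[φ] G) (inl (φ g n)) :=
  isConj_iff.mpr ⟨inr g, by rw [inl_aut, map_inv]⟩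

lemma right_eq_one_of_sq_eq_one (hG : Odd (Nat.card G)) {x : N ⋊[φ] G} (hx : x ^ 2 = 1) :
    x.right = 1 := by
  have h2 : orderOf x.right ∣ 2 :=
    orderOf_dvd_of_pow_eq_one (by rw [← rightHom_eq_right, ← map_pow, hx, map_one])
  exact orderOf_eq_one_iff.mp <|
    (Nat.coprime_two_left.mpr hG).coprime_dvd_left h2 |>.eq_one_of_dvd (orderOf_dvd_natCard _)

lemma setOf_orderOf_eq_two (hG : Odd (Nat.card G)) :
    {x : N ⋊[φ] G | orderOf x = 2} = inl '' {n : N | orderOf n = 2} := by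
  ext x
  simp only [Set.mem_image, Set.mem_ofPred_eq]
  constructor
  · intro hx
    have hright := right_eq_one_of_sq_eq_one hG (hx ▸ pow_orderOf_eq_one x)
    rw [← inl_left_mul_inr_right x, hright, map_one, mul_one] at hx ⊢
    exact ⟨x.left, by rwa [orderOf_injective inl inl_injective] at hx, rfl⟩
  · rintro ⟨n, hn, rfl⟩
    rwa [orderOf_injective inl inl_injective]

end SemidirectProduct

lemma ZMod.add_self_eq_zero_iff {n m : ℕ} [NeZero n] (hn : n = 2 * m) (x : ZMod n) :
    x + x = 0 ↔ x = 0 ∨ x = m := by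
  rw [add_eq_zero_iff_neg_eq, ZMod.neg_eq_self_iff]
  refine or_congr_right ⟨fun h => ?_, fun h => ?_⟩
  · rw [← ZMod.natCast_zmod_val x]
    congr
    omega
  · have : m < n := by have := NeZero.ne n; omega
    rw [h, ZMod.val_natCast_of_lt this, hn]

lemma ZMod.natCast_ne_zero_of_two_mul_eq {n m : ℕ} [NeZero n] (hn : n = 2 * m) :
    (m : ZMod n) ≠ 0 := by
  have := NeZero.ne n
  rw [Ne, ZMod.natCast_eq_zero_iff]
  exact fun h => by have := Nat.le_of_dvd (by omega) h; omega

lemma ZMod.setOf_addOrderOf_prod_eq_two {n m : ℕ} [NeZero n] (hn : n = 2 * m) :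
    {p : ZMod n × ZMod n | addOrderOf p = 2} =
      {((m : ZMod n), 0), (0, (m : ZMod n)), ((m : ZMod n), (m : ZMod n))} := by
  have hm := ZMod.natCast_ne_zero_of_two_mul_eq hn
  ext ⟨x, y⟩
  simp only [Set.mem_ofPred_eq, addOrderOf_eq_prime_iff, two_nsmul, Prod.ext_iff, Prod.fst_add,
    Prod.snd_add, Prod.fst_zero, Prod.snd_zero, ZMod.add_self_eq_zero_iff hn, Set.mem_insert_iff,
    Set.mem_singleton_iff, ne_eq]
  constructor
  · rintro ⟨⟨rfl | rfl, rfl | rfl⟩, h⟩ <;> simp_all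
  · rintro (⟨rfl, rfl⟩ | ⟨rfl, rfl⟩ | ⟨rfl, rfl⟩) <;> simp [hm]

lemma theta_ofAdd_one (α : ℕ) : theta α (.ofAdd 1) = A0 α := by
  show Additive.toMul (ZMod.lift 3 _ ((1 : ℤ) : ZMod 3)) = A0 α
  rw [ZMod.lift_coe]
  exact one_zsmul (Additive.ofMul (A0 α))

lemma A0_ofAdd (α : ℕ) (p : ZMod (2 ^ α) × ZMod (2 ^ α)) :
    A0 α (.ofAdd p) = .ofAdd (-p.2, p.1 - p.2) :=
  rfl

section Galpha

open SemidirectProduct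

variable {α : ℕ}

local notation "τ" => ((2 ^ (α - 1) : ℕ) : ZMod (2 ^ α))

lemma setOf_orderOf_eq_two_galpha (hα : 1 ≤ α) :
    {g : Galpha α | orderOf g = 2} =
      {inl (.ofAdd (τ, 0)), inl (.ofAdd (0, τ)), inl (.ofAdd (τ, τ))} := by
  have hN : {n : Multiplicative (ZMod (2 ^ α) × ZMod (2 ^ α)) | orderOf n = 2} =
      Multiplicative.ofAdd '' {p | addOrderOf p = 2} := by
    ext n
    simp [← orderOf_ofAdd_eq_addOrderOf]
  rw [setOf_orderOf_eq_two (by simp; decide), hN,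
    ZMod.setOf_addOrderOf_prod_eq_two (mul_pow_sub_one (by omega) 2).symm]
  simp only [Set.image_insert_eq, Set.image_singleton]

lemma isConj_of_orderOf_eq_two_galpha (hα : 1 ≤ α) {g : Galpha α} (hg : orderOf g = 2) :
    IsConj g (inl (.ofAdd (τ, 0))) := by
  have hτ : -τ = τ := neg_eq_of_add_eq_zero_right <|
    (ZMod.add_self_eq_zero_iff (mul_pow_sub_one (by omega) 2).symm _).mpr (.inr rfl)
  have h₁₂ : IsConj (inl (.ofAdd (τ, 0)) : Galpha α) (inl (.ofAdd (0, τ))) := by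
    simpa only [theta_ofAdd_one, A0_ofAdd, neg_zero, sub_zero] using
      isConj_inl_apply (φ := theta α) (.ofAdd 1) (.ofAdd (τ, 0))
  have h₂₃ : IsConj (inl (.ofAdd (0, τ)) : Galpha α) (inl (.ofAdd (τ, τ))) := by
    simpa only [theta_ofAdd_one, A0_ofAdd, hτ, zero_sub] using
      isConj_inl_apply (φ := theta α) (.ofAdd 1) (.ofAdd (0, τ))
  rw [← Set.mem_ofPred_eq (p := fun g => orderOf g = 2), setOf_orderOf_eq_two_galpha hα] at hg
  rcases hg with rfl | rfl | rfl
  · exact .refl _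
  · exact h₁₂.symm
  · exact (h₁₂.trans h₂₃).symm

end Galpha

theorem stmt_9 (α : ℕ) (hα : 1 ≤ α) :
    ({g : Galpha α | orderOf g = 2} =
      {SemidirectProduct.inl
          (Multiplicative.ofAdd (((2 ^ (α - 1) : ℕ) : ZMod (2 ^ α)), (0 : ZMod (2 ^ α)))),
        SemidirectProduct.inl
          (Multiplicative.ofAdd ((0 : ZMod (2 ^ α)), ((2 ^ (α - 1) : ℕ) : ZMod (2 ^ α)))),
        SemidirectProduct.inl
          (Multiplicative.ofAdd (((2 ^ (α - 1) : ℕ) : ZMod (2 ^ α)),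
            ((2 ^ (α - 1) : ℕ) : ZMod (2 ^ α))))}) ∧
    (∀ a b : Galpha α, orderOf a = 2 → orderOf b = 2 → IsConj a b) ∧
    Pertinent (Galpha α) ∧ Nat.card (Galpha α) = 3 * 4 ^ α := by
  have hset := setOf_orderOf_eq_two_galpha hα
  have hconj : ∀ a b : Galpha α, orderOf a = 2 → orderOf b = 2 → IsConj a b := fun a b ha hb =>
    (isConj_of_orderOf_eq_two_galpha hα ha).trans (isConj_of_orderOf_eq_two_galpha hα hb).symm
  have hcard : Nat.card (Galpha α) = 3 * 4 ^ α := by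
    simp [← mul_pow]
    ring
  have hτ := ZMod.natCast_ne_zero_of_two_mul_eq (mul_pow_sub_one (by omega : α ≠ 0) 2).symm
  refine ⟨hset, hconj, ⟨Nat.finite_of_card_ne_zero (by simp [hcard]), ?_, hconj⟩, hcard⟩
  rw [hset, Set.ncard_eq_three]
  push_cast at hτ
  exact ⟨_, _, _, by simp [hτ, hτ.symm], by simp [hτ.symm], by simp [hτ.symm], rfl⟩
end

section
/- Let q be a prime power with q ≡ 1 (mod 4). Then the set X = {x ∈ F_q : x is a nonzero non-square and x − 2 is a nonzero square} is nonempty. -/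
/-!
Suppose no such `x` exists. Since `-1` is a square, negation preserves (non-)squares, and the
assumption "`x` nonsquare ⇒ `x - 2` nonsquare" turns into "`u` nonsquare ⇒ `u + 2` nonsquare".
As `2` is invertible in the prime field, iterating gives "`u` nonsquare ⇒ `u + 1` nonsquare".
But for a nonsquare `u`, the quotient `(u + 2) / u = 1 + 2 / u` of two nonsquares is a square,
while `2 / u` is a nonsquare, so `1 + 2 / u` should be a nonsquare.
-/

lemma isSquare_neg_iff_of_isSquare_neg_one {R : Type*} [CommRing R] (h : IsSquare (-1 : R))
    {a : R} : IsSquare (-a) ↔ IsSquare a :=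
  ⟨fun ha => by simpa using h.mul ha, fun ha => by simpa using h.mul ha⟩

lemma add_natCast_mul_of_forall_add {R : Type*} [Semiring R] {P : R → Prop} {c : R}
    (h : ∀ u, P u → P (u + c)) {u : R} (hu : P u) (n : ℕ) : P (u + n * c) := by
  induction n with
  | zero => simpa using hu
  | succ n ih => simpa [add_mul, add_assoc] using h _ ih

lemma exists_natCast_mul_two_eq_one {R : Type*} [Ring R] (hR : Odd (ringChar R)) :
    ∃ n : ℕ, (n : R) * 2 = 1 := by
  refine ⟨(ringChar R + 1) / 2, ?_⟩
  have h : (ringChar R + 1) / 2 * 2 = ringChar R + 1 := Nat.div_mul_cancel (hR.add_one).two_dvd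
  exact_mod_cast (congrArg (Nat.cast : ℕ → R) h).trans (by simp)

lemma isSquare_mul_of_not_isSquare {F : Type*} [Field F] [Fintype F] {a b : F}
    (ha : ¬IsSquare a) (hb : ¬IsSquare b) : IsSquare (a * b) := by
  classical
  have ha0 : a ≠ 0 := by rintro rfl; exact ha .zero
  have hb0 : b ≠ 0 := by rintro rfl; exact hb .zero
  refine (quadraticChar_one_iff_isSquare (mul_ne_zero ha0 hb0)).mp ?_
  rw [map_mul, quadraticChar_neg_one_iff_not_isSquare.mpr ha,
    quadraticChar_neg_one_iff_not_isSquare.mpr hb]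
  norm_num

lemma not_isSquare_add_two_of_not_isSquare_sub_two {F : Type*} [Field F]
    (hneg : IsSquare (-1 : F)) (h2 : (2 : F) ≠ 0)
    (hsub : ∀ x : F, ¬IsSquare x → x - 2 ≠ 0 → ¬IsSquare (x - 2))
    {u : F} (hu : ¬IsSquare u) : ¬IsSquare (u + 2) := by
  have hneg_iff := fun a : F => isSquare_neg_iff_of_isSquare_neg_one hneg (a := a)
  have hadd : ∀ v : F, ¬IsSquare v → v + 2 ≠ 0 → ¬IsSquare (v + 2) := by
    intro v hv hv2
    have := hsub (-v) ((hneg_iff v).not.mpr hv) (by rwa [← neg_add', neg_ne_zero])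
    rwa [← neg_add', hneg_iff] at this
  have htwo : IsSquare (2 : F) := by
    by_contra htwo
    exact hadd 2 htwo (by rw [← two_mul]; exact mul_ne_zero h2 h2) ⟨2, by ring⟩
  refine hadd u hu fun hu2 => hu ?_
  rw [eq_neg_of_add_eq_zero_left hu2, hneg_iff]
  exact htwo

lemma false_of_forall_not_isSquare_add_two {F : Type*} [Field F] [Fintype F]
    (hF : ringChar F ≠ 2) (hadd : ∀ u : F, ¬IsSquare u → ¬IsSquare (u + 2)) : False := by
  obtain ⟨u, hu⟩ := FiniteField.exists_nonsquare hF
  have htwo : IsSquare (2 : F) := by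
    by_contra htwo
    exact hadd 2 htwo ⟨2, by ring⟩
  have hu0 : u ≠ 0 := by rintro rfl; exact hu .zero
  have hw : ¬IsSquare (2 / u) := fun hw => hu <| by
    rw [← div_div_cancel₀ (Ring.two_ne_zero hF) (b := u)]
    exact htwo.div hw
  obtain ⟨n, hn⟩ := exists_natCast_mul_two_eq_one ((CharP.prime_ringChar F).odd_of_ne_two hF)
  have hw1 : ¬IsSquare (2 / u + 1) := by
    simpa [hn] using add_natCast_mul_of_forall_add hadd hw n
  have hquot : IsSquare ((u + 2) * u⁻¹) :=
    isSquare_mul_of_not_isSquare (hadd u hu) (isSquare_inv.not.mpr hu)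
  refine hw1 ?_
  convert hquot using 1
  field_simp
  ring

theorem stmt_13 (F : Type*) [Field F] [Fintype F] (hq : Fintype.card F % 4 = 1) :
    ∃ x : F, x ≠ 0 ∧ ¬ IsSquare x ∧ x - 2 ≠ 0 ∧ IsSquare (x - 2) := by
  by_contra! hnone
  have hF : ringChar F ≠ 2 := FiniteField.even_card_iff_char_two.not.mpr (by omega)
  have hneg : IsSquare (-1 : F) := FiniteField.isSquare_neg_one_iff.mpr (by omega)
  refine false_of_forall_not_isSquare_add_two hF fun u hu => ?_
  refine not_isSquare_add_two_of_not_isSquare_sub_two hneg (Ring.two_ne_zero hF) ?_ hu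
  exact fun x hx => hnone x (by rintro rfl; exact hx .zero) hx
end

section
/- Let G = H_n ≥ H_{n−1} ≥ ... ≥ H_1 ≥ J be a chain of subgroups of a finite additive group G with |J| = 2. If for each 1 ≤ i ≤ n−1 there exists a J-resolvable (H_{i+1}, H_i, 3, 1)-difference family F_i, then their union ⋃_{i=1}^{n−1} F_i is a J-resolvable (G, H_1, 3, 1)-difference family. -/
/-- The multiset of differences of a block `B` (all `x - y` with `x ≠ y` in `B`). -/
def blockDiffs {G : Type*} [AddGroup G] [DecidableEq G] (B : Finset G) : Multiset G :=
  ((B ×ˢ B).filter fun p => p.1 ≠ p.2).val.map fun p => p.1 - p.2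

/-- `F` is a `J`-resolvable `(A, B, 3, 1)`-difference family (relative to the
subgroup `B ≤ A`), where `J = {0, j}`: the blocks are 3-subsets of `A`, the
differences cover each element of `A \ B` exactly once and no other element,
and the multiset union of the blocks is a complete system of representatives
for the (left) cosets of `J` in `A` not contained in `B`. -/
def IsResolvableDF {G : Type*} [AddGroup G] [DecidableEq G]
    (A B : AddSubgroup G) (j : G) (F : Multiset (Finset G)) : Prop :=
  (∀ Bl ∈ F, Bl.card = 3 ∧ (Bl : Set G) ⊆ (A : Set G)) ∧
  (∀ g : G, g ∈ A → g ∉ B → (F.bind blockDiffs).count g = 1) ∧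
  (∀ g : G, (g ∉ A ∨ g ∈ B) → (F.bind blockDiffs).count g = 0) ∧
  (∀ g : G, g ∈ A → g ∉ B →
    (F.bind Finset.val).count g + (F.bind Finset.val).count (g + j) = 1) ∧
  (∀ g : G, (g ∉ A ∨ g ∈ B) → (F.bind Finset.val).count g = 0)

lemma combineRDF {G : Type*} [AddGroup G] [DecidableEq G]
    (B A C : AddSubgroup G) (j : G) (hBA : B ≤ A) (hAC : A ≤ C) (hjB : j ∈ B)
    (hjj : j + j = 0)
    {F1 F2 : Multiset (Finset G)}
    (h1 : IsResolvableDF A B j F1) (h2 : IsResolvableDF C A j F2) :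
    IsResolvableDF C B j (F1 + F2) := by
  obtain ⟨c1, d1, e1, r1, z1⟩ := h1
  obtain ⟨c2, d2, e2, r2, z2⟩ := h2
  have hjA : j ∈ A := hBA hjB
  refine ⟨?_, ?_, ?_, ?_, ?_⟩
  · intro Bl hBl
    rcases Multiset.mem_add.1 hBl with h | h
    · exact ⟨(c1 Bl h).1, fun x hx => hAC ((c1 Bl h).2 hx)⟩
    · exact c2 Bl h
  · intro g hgC hgB
    rw [Multiset.add_bind, Multiset.count_add]
    by_cases hgA : g ∈ A
    · rw [d1 g hgA hgB, e2 g (Or.inr hgA)]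
    · rw [e1 g (Or.inl hgA), d2 g hgC hgA]
  · intro g hg
    rw [Multiset.add_bind, Multiset.count_add]
    rcases hg with hg | hg
    · rw [e1 g (Or.inl fun h => hg (hAC h)), e2 g (Or.inl hg)]
    · rw [e1 g (Or.inr hg), e2 g (Or.inr (hBA hg))]
  · intro g hgC hgB
    rw [Multiset.add_bind, Multiset.count_add, Multiset.count_add]
    by_cases hgA : g ∈ A
    · have hgjA : g + j ∈ A := A.add_mem hgA hjA
      rw [z2 g (Or.inr hgA), z2 (g + j) (Or.inr hgjA)]
      have := r1 g hgA hgB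
      omega
    · have hgjA : g + j ∉ A := fun h => hgA (by
        have h2 : g + j + j ∈ A := A.add_mem h hjA
        rwa [add_assoc, hjj, add_zero] at h2)
      rw [z1 g (Or.inl hgA), z1 (g + j) (Or.inl hgjA)]
      have := r2 g hgC hgA
      omega
  · intro g hg
    rw [Multiset.add_bind, Multiset.count_add]
    rcases hg with hg | hg
    · rw [z1 g (Or.inl fun h => hg (hAC h)), z2 g (Or.inl hg)]
    · rw [z1 g (Or.inr hg), z2 g (Or.inr (hBA hg))]

theorem stmt_19 (G : Type*) [AddGroup G] [DecidableEq G] (n : ℕ) (hn : 1 ≤ n)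
    (H : ℕ → AddSubgroup G) (hTop : H n = ⊤)
    (hchain : ∀ i, 1 ≤ i → i < n → H i ≤ H (i + 1))
    (j : G) (hjH : j ∈ H 1) (hj0 : j ≠ 0) (hjj : j + j = 0)
    (F : ℕ → Multiset (Finset G))
    (hF : ∀ i, 1 ≤ i → i ≤ n - 1 → IsResolvableDF (H (i + 1)) (H i) j (F i)) :
    IsResolvableDF ⊤ (H 1) j (∑ i ∈ Finset.Icc 1 (n - 1), F i) := by
  have hmono : ∀ b, 1 ≤ b → b ≤ n → H 1 ≤ H b := by
    intro b
    induction b with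
    | zero => omega
    | succ k ih =>
      intro h1 h2
      rcases Nat.eq_or_lt_of_le h1 with h | h
      · simp [← h]
      · exact (ih (by omega) (by omega)).trans (hchain k (by omega) (by omega))
  have key : ∀ m, 1 ≤ m → m ≤ n →
      IsResolvableDF (H m) (H 1) j (∑ i ∈ Finset.Icc 1 (m - 1), F i) := by
    intro m
    induction m with
    | zero => omega
    | succ k ih =>
      intro h1 h2
      rcases Nat.eq_or_lt_of_le h1 with h | h
      · simp only [← h]
        have h0 : (∑ i ∈ Finset.Icc 1 (1 - 1), F i) = 0 := by simp
        rw [h0]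
        exact ⟨by simp, fun g hg hng => absurd hg hng, by simp,
          fun g hg hng => absurd hg hng, by simp⟩
      · have hk1 : 1 ≤ k := by omega
        have hsum : (∑ i ∈ Finset.Icc 1 (k + 1 - 1), F i)
            = (∑ i ∈ Finset.Icc 1 (k - 1), F i) + F k := by
          have : k = (k - 1) + 1 := by omega
          rw [Nat.add_sub_cancel, this, Finset.sum_Icc_succ_top (by omega), ← this]
        rw [hsum]
        exact combineRDF (H 1) (H k) (H (k + 1)) j (hmono k hk1 (by omega))
          (hchain k hk1 (by omega)) hjH hjj
          (ih hk1 (by omega)) (hF k hk1 (by omega))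
  have := key n hn (le_refl n)
  rwa [hTop] at this
end
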